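/- arXiv:1602.01981 — 2 statements merged into one kernel-verified Lean document; each statement's English description precedes it below -/
import Mathlib

section
/- Let R be a commutative Noetherian ring, I_1,...,I_t ideals, and let S = ⊕_{n ∈ ℕ^t} I_1^{n_1}⋯I_t^{n_t} be the ℕ^t-graded Rees ring. If L is a finitely generated ℕ^t-graded S-module, then the union over all n ∈ ℕ^t of Ass_R(L_n) (associated primes of the graded component L_n as an R-module) is a finite set. -/
/-!
Every graded piece `ℒ n` is an `R`-submodule of `L`, so `Ass_R (ℒ n) ⊆ Ass_R L`, and it
suffices that `Ass_R L` is finite. The Rees ring `S` is Noetherian: it is generated over `R` by the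
finitely many elements `g • X_j` with `g` running through generators of `I_j`. For a module over
a Noetherian `R`-algebra `S`, every associated prime over `R` is the contraction of an associated
prime over `S` (take a maximal `S`-annihilator among the elements with the given `R`-annihilator),
and a finitely generated `S`-module has only finitely many of those.
-/

set_option synthInstance.maxHeartbeats 1000000

open MvPolynomial

variable (R : Type) [CommRing R]

/-- The `ℕᵗ`-graded (multi-)Rees algebra of a family of ideals `I : Fin t → Ideal R`,
realized as the subalgebra of `R[X₁,…,X_t]` of polynomials whose coefficient of the
monomial `X^d` lies in `I₁^{d₁}⋯I_t^{d_t}`. -/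
def multiReesAlgebra (t : ℕ) (I : Fin t → Ideal R) :
    Subalgebra R (MvPolynomial (Fin t) R) where
  carrier := {p | ∀ d : Fin t →₀ ℕ, p.coeff d ∈ ∏ j, I j ^ d j}
  add_mem' := fun {a b} ha hb d => by
    rw [coeff_add]; exact add_mem (ha d) (hb d)
  mul_mem' := fun {a b} ha hb d => by
    classical
    rw [coeff_mul]
    refine Submodule.sum_mem _ fun x hx => ?_
    have hxd : x.1 + x.2 = d := Finset.HasAntidiagonal.mem_antidiagonal.mp hx
    have : (∏ j, I j ^ x.1 j) * (∏ j, I j ^ x.2 j) ≤ ∏ j, I j ^ d j := by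
      rw [← Finset.prod_mul_distrib]
      refine le_of_eq (Finset.prod_congr rfl fun j _ => ?_)
      rw [← pow_add, ← hxd]; rfl
    exact this (Ideal.mul_mem_mul (ha x.1) (hb x.2))
  algebraMap_mem' := fun r d => by
    classical
    rw [algebraMap_eq, coeff_C]
    split_ifs with h
    · subst h
      simp [Ideal.top_pow]
    · exact Submodule.zero_mem _
  one_mem' := by
    intro d
    rw [coeff_one]
    split_ifs with h
    · subst h; simp [Ideal.top_pow]
    · exact Submodule.zero_mem _
  zero_mem' := fun d => by rw [coeff_zero]; exact Submodule.zero_mem _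

/-- The `ℕᵗ`-grading on the multi-Rees algebra: the degree-`n` component consists of the
elements supported on the single monomial `X^n` (with coefficient in `I^n`). -/
def multiReesGrading (t : ℕ) (I : Fin t → Ideal R) (n : Fin t → ℕ) :
    Submodule R (multiReesAlgebra R t I) where
  carrier := {s | ∀ d : Fin t →₀ ℕ, d ≠ Finsupp.equivFunOnFinite.symm n →
    (s : MvPolynomial (Fin t) R).coeff d = 0}
  add_mem' := fun {a b} ha hb d hd => by
    have : ((a + b : multiReesAlgebra R t I) : MvPolynomial (Fin t) R)
        = (a : MvPolynomial (Fin t) R) + b := rfl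
    rw [this, coeff_add, ha d hd, hb d hd, add_zero]
  zero_mem' := fun d _ => by simp
  smul_mem' := fun c a ha d hd => by
    have : ((c • a : multiReesAlgebra R t I) : MvPolynomial (Fin t) R)
        = c • (a : MvPolynomial (Fin t) R) := rfl
    rw [this, coeff_smul, ha d hd, smul_zero]

open Submodule

section AssociatedPrimes

theorem Submodule.colon_bot_singleton_le_colon_smul {R S M : Type*} [CommSemiring R]
    [AddCommMonoid M] [Module R M] [DistribSMul S M] [SMulCommClass R S M]
    (c : S) (z : M) :
    (⊥ : Submodule R M).colon {z} ≤ (⊥ : Submodule R M).colon {c • z} := fun a ha => by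
  rw [mem_colon_singleton, mem_bot] at ha ⊢
  rw [smul_comm, ha, smul_zero]

variable {A B M : Type*} [CommSemiring A] [CommSemiring B] [Algebra A B]
  [AddCommMonoid M] [Module A M] [Module B M] [IsScalarTower A B M]

theorem Submodule.comap_colon_bot_singleton (y : M) :
    ((⊥ : Submodule B M).colon {y}).comap (algebraMap A B) = (⊥ : Submodule A M).colon {y} := by
  ext r
  simp only [Ideal.mem_comap, mem_colon_singleton, mem_bot, algebraMap_smul]

theorem IsAssociatedPrime.exists_isAssociatedPrime_comap_eq [IsNoetherianRing A]
    [IsNoetherianRing B] {q : Ideal A} (hq : IsAssociatedPrime q M) :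
    ∃ P : Ideal B, IsAssociatedPrime P M ∧ P.comap (algebraMap A B) = q := by
  obtain ⟨hq, x, rfl⟩ := isAssociatedPrime_iff.mp hq
  set q := (⊥ : Submodule A M).colon {x}
  obtain ⟨P, ⟨y, hyq, rfl⟩, hmax⟩ := set_has_maximal_iff_noetherian.mpr inferInstance
    {P : Ideal B | ∃ y : M, (⊥ : Submodule A M).colon {y} = q ∧
      P = (⊥ : Submodule B M).colon {y}} ⟨_, x, rfl, rfl⟩
  have hcomap := (comap_colon_bot_singleton (B := B) y).trans hyq
  have eq_of_le {z : M} (hz : (⊥ : Submodule A M).colon {z} = q)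
      (hle : (⊥ : Submodule B M).colon {y} ≤ (⊥ : Submodule B M).colon {z}) :
      (⊥ : Submodule B M).colon {y} = (⊥ : Submodule B M).colon {z} :=
    hle.eq_of_not_lt (hmax _ ⟨z, hz, rfl⟩)
  refine ⟨_, isAssociatedPrime_iff.mpr ⟨⟨fun htop => hq.ne_top ?_,
    fun {s t} hst => or_iff_not_imp_right.mpr fun ht => ?_⟩, y, rfl⟩, hcomap⟩
  · rw [← hcomap, htop, Ideal.comap_top]
  by_cases htq : (⊥ : Submodule A M).colon {t • y} = q
  · rw [eq_of_le htq (colon_bot_singleton_le_colon_smul t y), mem_colon_singleton, smul_smul]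
    exact mem_colon_singleton.mp hst
  -- Otherwise some `r ∉ q` kills `t • y`; then `r • y` has annihilator `q` over `A`,
  -- and maximality forces `t` into `P`.
  obtain ⟨r, hrt, hrq⟩ := SetLike.exists_of_lt <|
    (hyq ▸ colon_bot_singleton_le_colon_smul t y).lt_of_ne (Ne.symm htq)
  have hrq' : (⊥ : Submodule A M).colon {r • y} = q := by
    ext a
    rw [mem_colon_singleton, smul_smul, ← mem_colon_singleton, hyq]
    exact hq.mul_mem_right_iff hrq
  refine absurd ?_ ht
  rw [eq_of_le hrq' (colon_bot_singleton_le_colon_smul r y), mem_colon_singleton, smul_comm]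
  exact mem_colon_singleton.mp hrt

theorem associatedPrimes.subset_image_comap [IsNoetherianRing A] [IsNoetherianRing B] :
    associatedPrimes A M ⊆ Ideal.comap (algebraMap A B) '' associatedPrimes B M := fun _ hq =>
  hq.exists_isAssociatedPrime_comap_eq

end AssociatedPrimes

theorem associatedPrimes.finite_of_isScalarTower (A : Type*) {B M : Type*} [CommRing A]
    [CommRing B] [Algebra A B] [AddCommGroup M] [Module A M] [Module B M] [IsScalarTower A B M]
    [IsNoetherianRing A] [IsNoetherianRing B] [Module.Finite B M] :
    (associatedPrimes A M).Finite :=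
  ((associatedPrimes.finite B M).image _).subset (associatedPrimes.subset_image_comap (B := B))

section FintypeProd

variable {ι M : Type*} [Fintype ι] [CommMonoid M] (f : ι → M)

theorem Fintype.prod_pow_single_one [DecidableEq ι] (j : ι) :
    ∏ i, f i ^ Finsupp.single j 1 i = f j := by
  simp only [Finsupp.single_apply, pow_ite, pow_one, pow_zero, Finset.prod_ite_eq,
    Finset.mem_univ, if_true]

theorem Fintype.prod_pow_add (d e : ι →₀ ℕ) :
    ∏ i, f i ^ (d + e) i = (∏ i, f i ^ d i) * ∏ i, f i ^ e i := by
  simp only [Finsupp.coe_add, Pi.add_apply, pow_add, Finset.prod_mul_distrib]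

end FintypeProd

section MultiRees

variable {R} {t : ℕ} (I : Fin t → Ideal R)

theorem monomial_single_one_mem_multiReesAlgebra {j : Fin t} {a : R} (ha : a ∈ I j) :
    monomial (Finsupp.single j 1) a ∈ multiReesAlgebra R t I := fun d => by
  classical
  rw [coeff_monomial]
  split_ifs with hd
  · rwa [← hd, Fintype.prod_pow_single_one]
  · exact zero_mem _

theorem monomial_mem_adjoin_monomial_single_one {d : Fin t →₀ ℕ} {r : R}
    (hr : r ∈ ∏ i, I i ^ d i) :
    monomial d r ∈ Algebra.adjoin R
      (⋃ j, (Submodule.map (monomial (Finsupp.single j 1)) (I j) :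
        Set (MvPolynomial (Fin t) R))) := by
  classical
  obtain ⟨m, rfl⟩ := Multiset.toFinsupp.surjective d
  induction m using Multiset.induction_on generalizing r with
  | empty =>
    rw [map_zero, monomial_zero', ← algebraMap_eq]
    exact Subalgebra.algebraMap_mem _ r
  | cons j m ih =>
    rw [← Multiset.singleton_add, map_add, Multiset.toFinsupp_singleton] at hr ⊢
    rw [Fintype.prod_pow_add, Fintype.prod_pow_single_one] at hr
    refine Submodule.mul_induction_on hr (fun a ha b hb => ?_) (fun x y hx hy => ?_)
    · rw [← monomial_mul]
      exact Subalgebra.mul_mem _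
        (Algebra.subset_adjoin (Set.mem_iUnion.mpr ⟨j, Submodule.mem_map_of_mem ha⟩)) (ih hb)
    · rw [map_add]
      exact add_mem hx hy

theorem adjoin_monomial_single_one_eq_multiReesAlgebra :
    Algebra.adjoin R
      (⋃ j, (Submodule.map (monomial (Finsupp.single j 1)) (I j) :
        Set (MvPolynomial (Fin t) R))) =
      multiReesAlgebra R t I := by
  refine le_antisymm (Algebra.adjoin_le ?_) fun p hp => ?_
  · rintro _ ⟨_, ⟨j, rfl⟩, a, ha, rfl⟩
    exact monomial_single_one_mem_multiReesAlgebra I ha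
  · rw [p.as_sum]
    exact Subalgebra.sum_mem _ fun d _ => monomial_mem_adjoin_monomial_single_one I (hp d)

theorem multiReesAlgebra_fg (hI : ∀ j, (I j).FG) : (multiReesAlgebra R t I).FG := by
  classical
  choose s hs using hI
  refine ⟨Finset.univ.biUnion fun j => (s j).image (monomial (Finsupp.single j 1)), ?_⟩
  rw [← adjoin_monomial_single_one_eq_multiReesAlgebra]
  simp only [Finset.coe_biUnion, Finset.coe_image, Finset.coe_univ, Set.mem_univ,
    Set.iUnion_true, Algebra.adjoin_iUnion, ← hs, Submodule.map_span, Algebra.adjoin_span]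

instance [IsNoetherianRing R] : IsNoetherianRing (multiReesAlgebra R t I) :=
  have : Algebra.FiniteType R (multiReesAlgebra R t I) :=
    ⟨(Subalgebra.fg_top _).mpr (multiReesAlgebra_fg I fun j => IsNoetherian.noetherian (I j))⟩
  Algebra.FiniteType.isNoetherianRing R _

end MultiRees

theorem west_finite_union_ass [IsNoetherianRing R] (t : ℕ) (I : Fin t → Ideal R)
    (L : Type) [AddCommGroup L] [Module R L] [Module (multiReesAlgebra R t I) L]
    [IsScalarTower R (multiReesAlgebra R t I) L]
    [Module.Finite (multiReesAlgebra R t I) L]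
    (ℒ : (Fin t → ℕ) → Submodule R L) :
    (⋃ n : Fin t → ℕ, associatedPrimes R (ℒ n)).Finite :=
  (associatedPrimes.finite_of_isScalarTower R (B := multiReesAlgebra R t I) (M := L)).subset <|
    Set.iUnion_subset fun n => associatedPrimes.subset_of_injective (ℒ n).injective_subtype
end

section
/- Let R be a commutative Noetherian ring, I_1,...,I_t ideals, and S the ℕ^t-graded Rees ring ⊕_{n ∈ ℕ^t} I_1^{n_1}⋯I_t^{n_t}. If L is a finitely generated ℕ^t-graded S-module, then either L_n = 0 for all sufficiently large n (componentwise), or L_n ≠ 0 for all sufficiently large n. -/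
/-!
A finitely generated graded module `L` is generated by homogeneous elements whose degrees lie in a
finite set `F`. Because `I^(b+c) = I^b I^c`, every homogeneous element of `S` of degree `b + c`
is a sum of products of elements of degrees `b` and `c`. So if `L_n = 0` for one `n` above all
degrees in `F`, then for `n' ≥ n` and a generator degree `m ∈ F`,
`S_{n'-m} L_m ⊆ S_{n'-n} S_{n-m} L_m ⊆ S_{n'-n} L_n = 0`, whence `L_{n'} = 0`. Either this
happens for some such `n`, or `L_n ≠ 0` for all of them.
-/

set_option synthInstance.maxHeartbeats 1000000

open MvPolynomial

variable (R : Type) [CommRing R]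

theorem Fintype.prod_pow_add_s9 {ι M : Type*} [Fintype ι] [CommMonoid M] (f : ι → M) (b c : ι → ℕ) :
    ∏ j, f j ^ (b + c) j = (∏ j, f j ^ b j) * ∏ j, f j ^ c j := by
  simp only [Pi.add_apply, pow_add, Finset.prod_mul_distrib]

namespace GradedModule

open DirectSum

section

variable {ι A L σ : Type*} [DecidableEq ι] [Semiring A] [AddCommMonoid L] [Module A L]
  [SetLike σ L] [AddSubmonoidClass σ L]

theorem exists_finset_span_iUnion_eq_top [Module.Finite A L] (ℒ : ι → σ) [Decomposition ℒ] :
    ∃ F : Finset ι, Submodule.span A (⋃ i ∈ F, (ℒ i : Set L)) = ⊤ := by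
  classical
  obtain ⟨G, hG⟩ := Module.Finite.fg_top (R := A) (M := L)
  refine ⟨G.biUnion fun g => (decompose ℒ g).support, eq_top_iff.mpr ?_⟩
  rw [← hG, Submodule.span_le]
  intro g hg
  rw [SetLike.mem_coe, ← sum_support_decompose ℒ g]
  refine Submodule.sum_mem _ fun i hi => Submodule.subset_span ?_
  exact Set.mem_biUnion (Finset.mem_biUnion.mpr ⟨g, hg, hi⟩) (SetLike.coe_mem _)

end

variable {ι R A L : Type*} [AddCancelCommMonoid ι] [CommSemiring R] [Semiring A]
  [Algebra R A] [AddCommMonoid L] [Module R L] [Module A L]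
  {𝒜 : ι → Submodule R A} {ℒ : ι → Submodule R L} [SetLike.GradedSMul 𝒜 ℒ]

theorem smul_eq_zero_of_mem_mul {b c m : ι} {s : A} (hs : s ∈ 𝒜 b * 𝒜 c) {y : L}
    (hy : y ∈ ℒ m) (h0 : ℒ (c + m) = ⊥) : s • y = 0 := by
  refine Submodule.mul_induction_on hs (fun u _ v hv => ?_) fun u v hu hv => ?_
  · have hvy : v • y ∈ ℒ (c + m) := SetLike.GradedSMul.smul_mem hv hy
    rw [h0, Submodule.mem_bot] at hvy
    rw [mul_smul, hvy, smul_zero]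
  · rw [add_smul, hu, hv, add_zero]

theorem component_add_eq_bot_of_eq_bot [DecidableEq ι] [Decomposition ℒ]
    (h𝒜 : ⨆ i, 𝒜 i = ⊤) (hmul : ∀ b c, 𝒜 (b + c) ≤ 𝒜 b * 𝒜 c) {F : Finset ι}
    (hF : Submodule.span A (⋃ i ∈ F, (ℒ i : Set L)) = ⊤) {n : ι}
    (hFn : ∀ m ∈ F, ∃ c, c + m = n) (h0 : ℒ n = ⊥) (e : ι) : ℒ (e + n) = ⊥ := by
  have homogeneous :
      ∀ m ∈ F, ∀ y ∈ ℒ m, ∀ b, ∀ s ∈ 𝒜 b, (decompose ℒ (s • y) (e + n) : L) = 0 := by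
    intro m hm y hy b s hs
    have hsy : s • y ∈ ℒ (b + m) := SetLike.GradedSMul.smul_mem hs hy
    by_cases hdeg : b + m = e + n
    · obtain ⟨c, rfl⟩ := hFn m hm
      rw [← add_assoc, add_left_inj] at hdeg
      subst hdeg
      rw [smul_eq_zero_of_mem_mul (hmul e c hs) hy h0, decompose_zero, DirectSum.zero_apply,
        ZeroMemClass.coe_zero]
    · exact decompose_of_mem_ne ℒ hsy hdeg
  have generators : ∀ m ∈ F, ∀ y ∈ ℒ m, ∀ s : A, (decompose ℒ (s • y) (e + n) : L) = 0 := by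
    intro m hm y hy s
    refine Submodule.iSup_induction 𝒜 (motive := fun s => (decompose ℒ (s • y) (e + n) : L) = 0)
      (h𝒜.symm ▸ Submodule.mem_top : s ∈ ⨆ i, 𝒜 i)
      (homogeneous m hm y hy) (by simp) fun s s' hs hs' => ?_
    rw [add_smul, decompose_add, DirectSum.add_apply, Submodule.coe_add, hs, hs', add_zero]
  have vanishes : ∀ z : L, ∀ s : A, (decompose ℒ (s • z) (e + n) : L) = 0 := by
    intro z
    induction (hF.symm ▸ Submodule.mem_top : z ∈ Submodule.span A _)
      using Submodule.span_induction with
    | mem y hy =>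
      obtain ⟨m, hm, hy⟩ := Set.mem_iUnion₂.mp hy
      exact generators m hm y hy
    | zero => simp
    | add y z _ _ hy hz =>
      intro s
      rw [smul_add, decompose_add, DirectSum.add_apply, Submodule.coe_add, hy, hz, add_zero]
    | smul a y _ hy => intro s; rw [← mul_smul]; exact hy _
  refine eq_bot_iff.mpr fun x hx => ?_
  rw [Submodule.mem_bot, ← decompose_of_mem_same ℒ hx, ← one_smul A x]
  exact vanishes x 1

end GradedModule

namespace MultiRees

variable {R} {t : ℕ} {I : Fin t → Ideal R}

variable (I) in
noncomputable def monomial (a : Fin t → ℕ) (r : R) (hr : r ∈ ∏ j, I j ^ a j) :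
    multiReesAlgebra R t I :=
  ⟨MvPolynomial.monomial (Finsupp.equivFunOnFinite.symm a) r, fun d => by
    rw [coeff_monomial]
    split_ifs with h
    · subst h; simpa using hr
    · exact zero_mem _⟩

theorem monomial_mem (a : Fin t → ℕ) (r : R) (hr : r ∈ ∏ j, I j ^ a j) :
    monomial I a r hr ∈ multiReesGrading R t I a := fun d hd => by
  rw [monomial, coeff_monomial, if_neg fun h => hd h.symm]

theorem monomial_add (a : Fin t → ℕ) {r r' : R} (hr : r ∈ ∏ j, I j ^ a j)
    (hr' : r' ∈ ∏ j, I j ^ a j) :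
    monomial I a (r + r') (add_mem hr hr') = monomial I a r hr + monomial I a r' hr' :=
  Subtype.ext (map_add (MvPolynomial.monomial _) r r')

theorem monomial_mul (b c : Fin t → ℕ) {r r' : R} (hr : r ∈ ∏ j, I j ^ b j)
    (hr' : r' ∈ ∏ j, I j ^ c j) :
    monomial I (b + c) (r * r')
        ((Fintype.prod_pow_add_s9 I b c).ge (Submodule.mul_mem_mul hr hr')) =
      monomial I b r hr * monomial I c r' hr' := by
  apply Subtype.ext
  have hdeg : Finsupp.equivFunOnFinite.symm (b + c) =
      Finsupp.equivFunOnFinite.symm b + Finsupp.equivFunOnFinite.symm c := by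
    ext; simp
  simp only [monomial, MulMemClass.coe_mul, MvPolynomial.monomial_mul, hdeg]

theorem eq_monomial_of_mem {a : Fin t → ℕ} {s : multiReesAlgebra R t I}
    (hs : s ∈ multiReesGrading R t I a) :
    ∃ r hr, s = monomial I a r hr := by
  refine ⟨_, by simpa using s.2 (Finsupp.equivFunOnFinite.symm a), Subtype.ext ?_⟩
  ext d
  rcases eq_or_ne d (Finsupp.equivFunOnFinite.symm a) with rfl | h
  · rw [monomial, coeff_monomial, if_pos rfl]
  · rw [hs d h, monomial, coeff_monomial, if_neg fun h' => h h'.symm]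

theorem iSup_grading_eq_top : ⨆ a, multiReesGrading R t I a = ⊤ := by
  refine eq_top_iff.mpr fun s _ => ?_
  have hs : s = ∑ v ∈ (s : MvPolynomial (Fin t) R).support, monomial I v _ (s.2 v) :=
    Subtype.ext <| by simp [monomial]
  rw [hs]
  exact Submodule.sum_mem _ fun v _ => Submodule.mem_iSup_of_mem _ (monomial_mem _ _ _)

theorem grading_add_le_mul (b c : Fin t → ℕ) :
    multiReesGrading R t I (b + c) ≤ multiReesGrading R t I b * multiReesGrading R t I c := by
  intro s hs
  obtain ⟨r, hr, rfl⟩ := eq_monomial_of_mem hs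
  have hr' : r ∈ (∏ j, I j ^ b j) * ∏ j, I j ^ c j := (Fintype.prod_pow_add_s9 I b c).le hr
  clear hs
  induction hr' using Submodule.mul_induction_on' with
  | mem_mul_mem u hu v hv =>
    rw [monomial_mul b c hu hv]
    exact Submodule.mul_mem_mul (monomial_mem b u hu) (monomial_mem c v hv)
  | add x hx y hy hx' hy' =>
    rw [monomial_add (b + c) ((Fintype.prod_pow_add_s9 I b c).ge hx)
      ((Fintype.prod_pow_add_s9 I b c).ge hy)]
    exact add_mem (hx' _) (hy' _)

end MultiRees

theorem west_dichotomy (t : ℕ) (I : Fin t → Ideal R)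
    (L : Type) [AddCommGroup L] [Module R L] [Module (multiReesAlgebra R t I) L]
    [Module.Finite (multiReesAlgebra R t I) L]
    (ℒ : (Fin t → ℕ) → Submodule R L) [DirectSum.Decomposition ℒ]
    [SetLike.GradedSMul (multiReesGrading R t I) ℒ] :
    (∃ k : ℕ, ∀ n : Fin t → ℕ, (∀ j, k ≤ n j) → ℒ n = ⊥) ∨
      (∃ k : ℕ, ∀ n : Fin t → ℕ, (∀ j, k ≤ n j) → ℒ n ≠ ⊥) := by
  obtain ⟨F, hF⟩ :=
    GradedModule.exists_finset_span_iUnion_eq_top (A := multiReesAlgebra R t I) ℒ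
  set d := F.sup fun m => Finset.univ.sup m
  have hFle : ∀ n : Fin t → ℕ, (∀ j, d ≤ n j) → ∀ m ∈ F, m ≤ n := fun n hn m hm j =>
    (Finset.le_sup (f := m) (Finset.mem_univ j)).trans ((Finset.le_sup hm).trans (hn j))
  by_cases h : ∃ n : Fin t → ℕ, (∀ j, d ≤ n j) ∧ ℒ n = ⊥
  · obtain ⟨n, hn, h0⟩ := h
    refine .inl ⟨Finset.univ.sup n, fun n' hn' => ?_⟩
    have hle : n ≤ n' := fun j => (Finset.le_sup (Finset.mem_univ j)).trans (hn' j)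
    rw [← tsub_add_cancel_of_le hle]
    exact GradedModule.component_add_eq_bot_of_eq_bot MultiRees.iSup_grading_eq_top
      MultiRees.grading_add_le_mul hF
      (fun m hm => ⟨n - m, tsub_add_cancel_of_le (hFle n hn m hm)⟩) h0 _
  · push Not at h
    exact .inr ⟨d, h⟩
end
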